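/- For any vector v and threshold w, the DRS algorithm produces the same number of output vectors on the inputs (v ⊗ [1,1]ᵀ) ⊗ [0,1]ᵀ and (v ⊗ [0,1]ᵀ) ⊗ [1,1]ᵀ. In both cases, the number of outputs equals n_DRS(v) if 2·wH(v) ≤ w, and equals 2·n_DRS(v) if 2·wH(v) > w. -/
import Mathlib


/-- Hamming weight of a vector over `ZMod 2` represented as a list. -/
def wtH (l : List (ZMod 2)) : ℕ := l.countP (fun a => a ≠ 0)

/-- The DRS splitting algorithm on vectors of length `2^n` with weight threshold `w`. -/
def drs (w : ℕ) : ℕ → List (ZMod 2) → List (List (ZMod 2))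
  | 0, x => if wtH x = 0 then [] else [x]
  | n + 1, x =>
      if wtH x = 0 then []
      else if wtH x ≤ w then [x]
      else ((drs w n (x.take (2 ^ n))).map (fun y => y ++ List.replicate (2 ^ n) 0)) ++
           ((drs w n (x.drop (2 ^ n))).map (fun y => List.replicate (2 ^ n) (0 : ZMod 2) ++ y))

lemma wtH_replicate (k : ℕ) : wtH (List.replicate k (0 : ZMod 2)) = 0 := by
  simp [wtH, List.countP_eq_zero]

lemma wtH_append (a b : List (ZMod 2)) : wtH (a ++ b) = wtH a + wtH b := by
  simp [wtH, List.countP_append]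

lemma drs_of_wt_zero (w n : ℕ) (x : List (ZMod 2)) (h : wtH x = 0) :
    drs w n x = [] := by
  cases n <;> simp [drs, h]

lemma drs_len_of_le (w n : ℕ) (x : List (ZMod 2)) (h0 : wtH x ≠ 0) (h : wtH x ≤ w) :
    (drs w n x).length = 1 := by
  cases n <;> simp [drs, h0, h]

lemma drs_pad (w n : ℕ) (v : List (ZMod 2)) (hv : v.length = 2 ^ n) :
    (drs w (n + 1) (List.replicate (2 ^ n) (0 : ZMod 2) ++ v)).length
      = (drs w n v).length := by
  have hwt : wtH (List.replicate (2 ^ n) (0 : ZMod 2) ++ v) = wtH v := by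
    rw [wtH_append, wtH_replicate, Nat.zero_add]
  by_cases h0 : wtH v = 0
  · rw [drs_of_wt_zero w _ _ (by rw [hwt]; exact h0), drs_of_wt_zero w _ _ h0]
  · by_cases hle : wtH v ≤ w
    · rw [drs_len_of_le w _ _ (by rw [hwt]; exact h0) (by rw [hwt]; exact hle),
        drs_len_of_le w _ _ h0 hle]
    · have htake : (List.replicate (2 ^ n) (0 : ZMod 2) ++ v).take (2 ^ n)
          = List.replicate (2 ^ n) (0 : ZMod 2) := by
        rw [List.take_append_of_le_length (by simp)]
        simp
      have hdrop : (List.replicate (2 ^ n) (0 : ZMod 2) ++ v).drop (2 ^ n) = v := by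
        rw [List.drop_append_of_le_length (by simp)]
        simp
      simp only [drs, hwt, h0, hle, if_false, htake, hdrop,
        drs_of_wt_zero w n _ (wtH_replicate (2 ^ n))]
      simp

lemma drs_dbl (w n : ℕ) (v : List (ZMod 2)) (hv : v.length = 2 ^ n)
    (h : w < 2 * wtH v) :
    (drs w (n + 1) (v ++ v)).length = 2 * (drs w n v).length := by
  have hwt : wtH (v ++ v) = 2 * wtH v := by rw [wtH_append]; ring
  have h0 : wtH (v ++ v) ≠ 0 := by omega
  have hle : ¬ wtH (v ++ v) ≤ w := by omega
  have htake : (v ++ v).take (2 ^ n) = v := by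
    rw [← hv, List.take_left]
  have hdrop : (v ++ v).drop (2 ^ n) = v := by
    rw [← hv, List.drop_left]
  simp only [drs, h0, hle, if_false, htake, hdrop]
  simp [Nat.two_mul]

/-- For a vector `v` of length `2^n`, the DRS algorithm outputs the same number of
vectors on `(v ⊗ [1,1]ᵀ) ⊗ [0,1]ᵀ` and `(v ⊗ [0,1]ᵀ) ⊗ [1,1]ᵀ`; in both cases this
number equals `n_DRS(v)` if `2·wH(v) ≤ w`, and `2·n_DRS(v)` if `2·wH(v) > w`. -/
theorem drs_count_LR_eq_RL (w n : ℕ) (v : List (ZMod 2)) (hv : v.length = 2 ^ n) :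
    (drs w (n + 2) (List.replicate (2 ^ (n + 1)) (0 : ZMod 2) ++ (v ++ v))).length =
      (drs w (n + 2) ((List.replicate (2 ^ n) (0 : ZMod 2) ++ v) ++
        (List.replicate (2 ^ n) (0 : ZMod 2) ++ v))).length ∧
    (2 * wtH v ≤ w →
      (drs w (n + 2) (List.replicate (2 ^ (n + 1)) (0 : ZMod 2) ++ (v ++ v))).length =
        (drs w n v).length) ∧
    (w < 2 * wtH v →
      (drs w (n + 2) (List.replicate (2 ^ (n + 1)) (0 : ZMod 2) ++ (v ++ v))).length =
        2 * (drs w n v).length) := by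
  have hvv : (v ++ v).length = 2 ^ (n + 1) := by
    simp [hv, pow_succ, Nat.two_mul]; ring
  have hu : (List.replicate (2 ^ n) (0 : ZMod 2) ++ v).length = 2 ^ (n + 1) := by
    simp [hv, pow_succ, Nat.two_mul]; ring
  have hLHS : (drs w (n + 2) (List.replicate (2 ^ (n + 1)) (0 : ZMod 2) ++ (v ++ v))).length
      = (drs w (n + 1) (v ++ v)).length := drs_pad w (n + 1) (v ++ v) hvv
  have hwtu : wtH (List.replicate (2 ^ n) (0 : ZMod 2) ++ v) = wtH v := by
    rw [wtH_append, wtH_replicate, Nat.zero_add]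
  have hwtvv : wtH (v ++ v) = 2 * wtH v := by rw [wtH_append]; ring
  refine ⟨?_, ?_, ?_⟩
  · rw [hLHS]
    by_cases h0 : wtH v = 0
    · rw [drs_of_wt_zero w _ _ (by omega), drs_of_wt_zero w _ _ (by rw [wtH_append]; omega)]
    · by_cases hle : 2 * wtH v ≤ w
      · rw [drs_len_of_le w _ _ (by omega) (by omega),
          drs_len_of_le w _ _ (by rw [wtH_append]; omega) (by rw [wtH_append]; omega)]
      · rw [drs_dbl w n v hv (by omega),
          drs_dbl w (n + 1) _ hu (by rw [hwtu]; omega),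
          drs_pad w n v hv]
  · intro hle
    rw [hLHS]
    by_cases h0 : wtH v = 0
    · rw [drs_of_wt_zero w _ _ (by omega), drs_of_wt_zero w _ _ h0]
    · rw [drs_len_of_le w _ _ (by omega) (by omega), drs_len_of_le w _ _ h0 (by omega)]
  · intro hgt
    rw [hLHS, drs_dbl w n v hv hgt]
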